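/- arXiv:1809.03428 — 2 statements merged into one kernel-verified Lean document; each statement's English description precedes it below -/
import Mathlib

section
/- The Laplacian mechanism is ε-differentially private: if f is a deterministic function on inputs with global sensitivity Δf = max over adjacent inputs d, d' of |f(d) - f(d')|, then the mechanism A(d) = f(d) + Lap(Δf/ε), where Lap(b) has density (1/(2b))exp(-|t|/b), satisfies Pr[A(d) ∈ S] ≤ e^ε · Pr[A(d') ∈ S] for all measurable S and all adjacent d, d'. -/
open MeasureTheory Real

/-- The Laplace distribution with scale `b`, centered at `c`, as a measure on `ℝ`,
given by its density `(1/(2b)) exp (-|t-c|/b)` with respect to Lebesgue measure. -/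
noncomputable def laplaceMeasure (b c : ℝ) : Measure ℝ :=
  volume.withDensity (fun t => ENNReal.ofReal ((1 / (2 * b)) * Real.exp (-|t - c| / b)))

lemma laplace_density_le_exp_mul {b : ℝ} (hb : 0 < b) (c c' t : ℝ) :
    1 / (2 * b) * exp (-|t - c| / b) ≤
      exp (|c - c'| / b) * (1 / (2 * b) * exp (-|t - c'| / b)) := by
  have hexp : exp (-|t - c| / b) ≤ exp (|c - c'| / b) * exp (-|t - c'| / b) := by
    rw [← exp_add, exp_le_exp, ← add_div, div_le_div_iff_of_pos_right hb]
    linarith [abs_sub_le t c c']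
  calc 1 / (2 * b) * exp (-|t - c| / b)
      ≤ 1 / (2 * b) * (exp (|c - c'| / b) * exp (-|t - c'| / b)) := by gcongr
    _ = exp (|c - c'| / b) * (1 / (2 * b) * exp (-|t - c'| / b)) := by ring

lemma laplaceMeasure_le_smul {b : ℝ} (hb : 0 < b) (c c' : ℝ) :
    laplaceMeasure b c ≤ ENNReal.ofReal (exp (|c - c'| / b)) • laplaceMeasure b c' := by
  rw [laplaceMeasure, laplaceMeasure, ← withDensity_smul' _ _ ENNReal.ofReal_ne_top]
  refine withDensity_mono (Filter.Eventually.of_forall fun t => ?_)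
  rw [Pi.smul_apply, smul_eq_mul, ← ENNReal.ofReal_mul (exp_pos _).le]
  exact ENNReal.ofReal_le_ofReal (laplace_density_le_exp_mul hb c c' t)

/-- The Laplacian mechanism is ε-differentially private: if `f` has global sensitivity at
most `Δf` over adjacent inputs, then adding `Lap(Δf/ε)` noise to `f` satisfies
`Pr[A(d) ∈ S] ≤ e^ε · Pr[A(d') ∈ S]` for all measurable `S` and adjacent `d, d'`. -/
theorem laplacian_mechanism_differentially_private
    {X : Type*} (Adj : X → X → Prop) (f : X → ℝ) (Δf ε : ℝ)
    (hΔ : 0 < Δf) (hε : 0 < ε)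
    (hsens : ∀ d d', Adj d d' → |f d - f d'| ≤ Δf)
    (A : X → Measure ℝ) (hA : ∀ d, A d = laplaceMeasure (Δf / ε) (f d)) :
    ∀ d d', Adj d d' → ∀ S : Set ℝ, MeasurableSet S →
      A d S ≤ ENNReal.ofReal (Real.exp ε) * A d' S := by
  intro d d' hadj S _
  have hb : 0 < Δf / ε := div_pos hΔ hε
  have hratio : |f d - f d'| / (Δf / ε) ≤ ε := by
    rw [div_le_iff₀ hb, mul_div_cancel₀ _ hε.ne']
    exact hsens d d' hadj
  calc A d S ≤ ENNReal.ofReal (exp (|f d - f d'| / (Δf / ε))) * A d' S := by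
        rw [hA, hA]
        exact laplaceMeasure_le_smul hb (f d) (f d') S
    _ ≤ ENNReal.ofReal (exp ε) * A d' S := by gcongr
end

section
/- Privacy amplification by nullification: Suppose A is an ε-differentially private mechanism with respect to item-adjacency (inputs differing in one item). Let I_n be a random nullification mask that independently zeroes out each data item, such that for any fixed item i, the probability that i is nullified equals μ ∈ [0,1]. Then the mechanism x ↦ A(x ⊙ I_n) is ε'-differentially private with ε' = ln((1-μ)e^ε + μ). -/
/-!
Condition on the mask bit of the item `i` that distinguishes the two inputs `x` and
`insert i x`. The remaining mask bits are independent of it and treat both inputs alike, so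
`M x S = T` and `M (insert i x) S = μ T + (1 - μ) U`, where `T` and `U` are the averages of
`A` over the masked copies of `x` without and with `i` added back. The `ε`-privacy of `A`
gives `T ≤ e^ε U` and `U ≤ e^ε T`, and an elementary inequality about such mixtures then
bounds the ratio of `M x S` and `M (insert i x) S` in both directions by `(1 - μ) e^ε + μ`.
-/

open MeasureTheory Real

/-- Adjacency of item-set inputs: `x₁` and `x₂` differ by exactly one item. -/
def ItemAdjacent {ι : Type*} [DecidableEq ι] (x₁ x₂ : Finset ι) : Prop :=
  (∃ i, i ∉ x₂ ∧ x₁ = insert i x₂) ∨ (∃ i, i ∉ x₁ ∧ x₂ = insert i x₁)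

open scoped ENNReal

section CanonicallyOrderedCommSemiring

variable {R : Type*} [CommSemiring R] [LinearOrder R] [CanonicallyOrderedAdd R] {p q e T U : R}

theorem mul_add_mul_le_of_le_mul (h : U ≤ e * T) : p * T + q * U ≤ (q * e + p) * T := by
  have := CanonicallyOrderedAdd.toIsOrderedRing (R := R)
  calc p * T + q * U ≤ p * T + q * (e * T) := by gcongr
    _ = (q * e + p) * T := by ring

theorem le_mul_mul_add_mul_of_le_mul (hpq : p + q = 1) (he : 1 ≤ e) (h : T ≤ e * U) :
    T ≤ (q * e + p) * (p * T + q * U) := by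
  have := CanonicallyOrderedAdd.toIsOrderedRing (R := R)
  rcases le_total T U with hle | hle
  · calc T = p * T + q * T := by rw [← add_mul, hpq, one_mul]
      _ ≤ 1 * (p * T + q * U) := by rw [one_mul]; gcongr
      _ ≤ (q * e + p) * (p * T + q * U) := by
        gcongr
        calc (1 : R) = q * 1 + p := by rw [mul_one, add_comm, hpq]
          _ ≤ q * e + p := by gcongr
  · obtain ⟨f, rfl⟩ := exists_add_of_le he
    obtain ⟨d, rfl⟩ := exists_add_of_le hle
    -- with `e = 1 + f`, `T = U + d`: the right side is `(p + q) (p T + q e U) + p q f d`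
    calc U + d = p * (U + d) + q * (U + d) := by rw [← add_mul, hpq, one_mul]
      _ ≤ (p + q) * (p * (U + d) + q * ((1 + f) * U)) := by rw [hpq, one_mul]; gcongr
      _ ≤ (p + q) * (p * (U + d) + q * ((1 + f) * U)) + p * q * f * d := le_self_add
      _ = (q * (1 + f) + p) * (p * (U + d) + q * U) := by ring

end CanonicallyOrderedCommSemiring

theorem lintegral_pi_eq_lintegral_lintegral_update {δ : Type*} [Fintype δ] [DecidableEq δ]
    {X : δ → Type*} [∀ i, MeasurableSpace (X i)] (μ : ∀ i, Measure (X i))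
    [∀ i, IsProbabilityMeasure (μ i)] {f : (∀ i, X i) → ℝ≥0∞} (hf : Measurable f) (i : δ) :
    ∫⁻ x, f x ∂Measure.pi μ = ∫⁻ x, ∫⁻ y, f (Function.update x i y) ∂μ i ∂Measure.pi μ := by
  have hmarg := lmarginal_singleton (μ := μ) f i
  refine lintegral_eq_of_lmarginal_eq {i} hf (hmarg ▸ hf.lmarginal μ) ?_
  rw [hmarg, lmarginal_singleton]
  ext x
  simp only [Function.update_idem, lintegral_const, measure_univ, mul_one]

namespace Finset

variable {ι : Type*} [DecidableEq ι] {x : Finset ι} {i : ι}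

theorem filter_insert_update_true (hi : i ∉ x) (m : ι → Bool) :
    (insert i x).filter (fun j => Function.update m i true j = false)
      = x.filter (fun j => m j = false) := by
  rw [filter_insert, if_neg (by simp)]
  refine filter_congr fun j hj => ?_
  rw [Function.update_of_ne (ne_of_mem_of_not_mem hj hi)]

theorem filter_insert_update_false (hi : i ∉ x) (m : ι → Bool) :
    (insert i x).filter (fun j => Function.update m i false j = false)
      = insert i (x.filter (fun j => m j = false)) := by
  rw [filter_insert, if_pos (by simp)]
  congr 1
  refine filter_congr fun j hj => ?_
  rw [Function.update_of_ne (ne_of_mem_of_not_mem hj hi)]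

end Finset

theorem lintegral_pi_filter_insert {ι : Type*} [Fintype ι] [DecidableEq ι] (β : Measure Bool)
    [IsProbabilityMeasure β] (g : Finset ι → ℝ≥0∞) {x : Finset ι} {i : ι} (hi : i ∉ x) :
    ∫⁻ m, g ((insert i x).filter fun j => m j = false) ∂Measure.pi (fun _ => β)
      = β {true} * ∫⁻ m, g (x.filter fun j => m j = false) ∂Measure.pi (fun _ => β)
        + β {false} * ∫⁻ m, g (insert i (x.filter fun j => m j = false))
          ∂Measure.pi (fun _ => β) := by
  rw [lintegral_pi_eq_lintegral_lintegral_update _ (measurable_of_countable _) i,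
    ← lintegral_const_mul _ (measurable_of_countable _),
    ← lintegral_const_mul _ (measurable_of_countable _),
    ← lintegral_add_left (measurable_of_countable _)]
  refine lintegral_congr fun m => ?_
  simp only [lintegral_fintype, Fintype.sum_bool, Finset.filter_insert_update_true hi,
    Finset.filter_insert_update_false hi, mul_comm]

/-- Privacy amplification by nullification: if `A` is `ε`-DP w.r.t. item-adjacency and
each item is independently nullified with probability `μ` (mask coordinates are i.i.d.
with `Pr[nullified] = μ`), then `x ↦ A(x ⊙ Iₙ)` is `ε'`-DP with
`ε' = ln((1-μ)·e^ε + μ)`. Here `m i = true` means item `i` is nullified (removed). -/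
theorem nullification_privacy_amplification
    {ι : Type*} [Fintype ι] [DecidableEq ι] {Ω : Type*} [MeasurableSpace Ω]
    (A : Finset ι → Measure Ω) (ε μ : ℝ) (hε : 0 ≤ ε) (hμ0 : 0 ≤ μ) (hμ1 : μ ≤ 1)
    (hDP : ∀ x₁ x₂ : Finset ι, ItemAdjacent x₁ x₂ → ∀ S : Set Ω, MeasurableSet S →
      A x₁ S ≤ ENNReal.ofReal (Real.exp ε) * A x₂ S)
    (bern : Measure Bool) (hbernT : bern {true} = ENNReal.ofReal μ)
    (hbernF : bern {false} = ENNReal.ofReal (1 - μ))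
    (ν : Measure (ι → Bool)) (hν : ν = Measure.pi (fun _ => bern))
    (M : Finset ι → Measure Ω)
    (hM : ∀ x, M x = ν.bind (fun m => A (x.filter (fun i => m i = false)))) :
    ∀ x₁ x₂ : Finset ι, ItemAdjacent x₁ x₂ → ∀ S : Set Ω, MeasurableSet S →
      M x₁ S ≤ ENNReal.ofReal (Real.exp (Real.log ((1 - μ) * Real.exp ε + μ))) * M x₂ S := by
  intro x₁ x₂ hadj S hS
  have hmass : bern {true} + bern {false} = 1 := by
    rw [hbernT, hbernF, ← ENNReal.ofReal_add hμ0 (by linarith), add_sub_cancel, ENNReal.ofReal_one]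
  have : IsProbabilityMeasure bern :=
    ⟨by rw [← Finset.coe_univ, ← sum_measure_singleton, Fintype.sum_bool, hmass]⟩
  have hexp : 1 ≤ ENNReal.ofReal (exp ε) := by simpa using one_le_exp hε
  have hfactor : 1 ≤ (1 - μ) * exp ε + μ := by nlinarith [one_le_exp hε]
  rw [exp_log (by linarith), ENNReal.ofReal_add (by positivity) hμ0,
    ENNReal.ofReal_mul (by linarith), ← hbernT, ← hbernF]
  simp only [hM, hν, Measure.bind_apply hS (measurable_of_countable _).aemeasurable]
  rcases hadj with ⟨i, hi, rfl⟩ | ⟨i, hi, rfl⟩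
  · rw [lintegral_pi_filter_insert bern (fun y => A y S) hi]
    refine mul_add_mul_le_of_le_mul <| (lintegral_mono fun m => ?_).trans_eq
      (lintegral_const_mul _ (measurable_of_countable _))
    exact hDP _ _ (Or.inl ⟨i, fun h => hi (Finset.filter_subset _ _ h), rfl⟩) S hS
  · rw [lintegral_pi_filter_insert bern (fun y => A y S) hi]
    refine le_mul_mul_add_mul_of_le_mul hmass hexp <| (lintegral_mono fun m => ?_).trans_eq
      (lintegral_const_mul _ (measurable_of_countable _))
    exact hDP _ _ (Or.inr ⟨i, fun h => hi (Finset.filter_subset _ _ h), rfl⟩) S hS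
end
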